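/- For every infinite virtually cyclic subgroup K of Houghton's group H_n there exists an infinite cyclic subgroup L of finite index in K (in particular K ∩ L is infinite, i.e., L is commensurate with K) such that every g ∈ H_n for which L ∩ gLg⁻¹ is infinite normalizes L; that is, {g ∈ H_n : |L ∩ gLg⁻¹| = ∞} = N_{H_n}(L). -/

import Mathlib

/-- `f : ℕ × Fin n → ℕ × Fin n` is eventually a translation with translation
vector `m : Fin n → ℤ`: on each ray `ℕ × {x}`, for all sufficiently large `i`,
`f` sends `(i, x)` to `(i + m x, x)`. -/
def EvTrans (n : ℕ) (f : ℕ × Fin n → ℕ × Fin n) (m : Fin n → ℤ) : Prop :=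
  ∀ x : Fin n, ∃ z : ℕ, ∀ i : ℕ, z ≤ i →
    (f (i, x)).2 = x ∧ ((f (i, x)).1 : ℤ) = (i : ℤ) + m x

/-- Houghton's group `H_n`: the subgroup of the symmetric group on
`S = ℕ × Fin n` consisting of the permutations that are eventually
translations on each ray. -/
def Houghton (n : ℕ) : Subgroup (Equiv.Perm (ℕ × Fin n)) where
  carrier := {f : Equiv.Perm (ℕ × Fin n) | ∃ m : Fin n → ℤ, EvTrans n (⇑f) m}
  one_mem' := ⟨0, fun x => ⟨0, fun i _ => by simp⟩⟩
  mul_mem' := by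
    rintro a b ⟨ma, hA⟩ ⟨mb, hB⟩
    refine ⟨ma + mb, fun x => ?_⟩
    obtain ⟨za, hza⟩ := hA x
    obtain ⟨zb, hzb⟩ := hB x
    refine ⟨max zb ((za : ℤ) - mb x).toNat, fun i hi => ?_⟩
    have hib : zb ≤ i := le_trans (le_max_left _ _) hi
    obtain ⟨h2, h1⟩ := hzb i hib
    have hbx : (⇑b) (i, x) = ((b (i, x)).1, x) := Prod.ext_iff.mpr ⟨rfl, h2⟩
    have hk : za ≤ (b (i, x)).1 := by
      have h3 : ((za : ℤ) - mb x) ≤ (i : ℤ) := by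
        calc ((za : ℤ) - mb x) ≤ (((za : ℤ) - mb x).toNat : ℤ) := Int.self_le_toNat _
          _ ≤ (i : ℤ) := by exact_mod_cast le_trans (le_max_right _ _) hi
      have h4 : (za : ℤ) ≤ ((b (i, x)).1 : ℤ) := by rw [h1]; linarith
      exact_mod_cast h4
    obtain ⟨h4, h5⟩ := hza (b (i, x)).1 hk
    constructor
    · show ((a * b) (i, x)).2 = x
      rw [Equiv.Perm.mul_apply, hbx]
      exact h4
    · show (((a * b) (i, x)).1 : ℤ) = (i : ℤ) + (ma + mb) x
      rw [Equiv.Perm.mul_apply, hbx, h5, h1, Pi.add_apply]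
      ring
  inv_mem' := by
    rintro a ⟨m, hm⟩
    refine ⟨-m, fun x => ?_⟩
    obtain ⟨z, hz⟩ := hm x
    refine ⟨((z : ℤ) + m x).toNat, fun i hi => ?_⟩
    have h1 : (z : ℤ) + m x ≤ (i : ℤ) :=
      le_trans (Int.self_le_toNat _) (by exact_mod_cast hi)
    have h0 : (0 : ℤ) ≤ (i : ℤ) - m x := by
      have hz0 : (0 : ℤ) ≤ (z : ℤ) := Int.natCast_nonneg z
      linarith
    set j := ((i : ℤ) - m x).toNat with hjdef
    have hj' : (j : ℤ) = (i : ℤ) - m x := Int.toNat_of_nonneg h0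
    have hjz : z ≤ j := by
      have : (z : ℤ) ≤ (j : ℤ) := by rw [hj']; linarith
      exact_mod_cast this
    obtain ⟨h2, h3⟩ := hz j hjz
    have hfst : (a (j, x)).1 = i := by
      have : ((a (j, x)).1 : ℤ) = (i : ℤ) := by rw [h3, hj']; ring
      exact_mod_cast this
    have hfix : (⇑a) (j, x) = (i, x) := Prod.ext_iff.mpr ⟨hfst, h2⟩
    have hinv : (⇑a⁻¹) (i, x) = (j, x) := by
      rw [← hfix]
      exact Equiv.symm_apply_apply a (j, x)
    constructor
    · rw [hinv]
    · rw [hinv]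
      show (j : ℤ) = (i : ℤ) + (-m) x
      rw [hj', Pi.neg_apply]
      ring

/-!
Far out on each ray an element of `H_n` is either the identity or a nonzero translation, so only
finitely many points lie on nontrivial finite orbits; if `c` has infinite order, the product `N` of
their periods gives a power `k = c ^ N` all of whose finite orbits are fixed points, and `k` has a
nonzero translation vector (otherwise it would be the identity off a finite set, hence trivial).
Take `L = ⟨k⟩`. If `L ∩ gLg⁻¹` is infinite, then `g k^b g⁻¹ = k^a` with `a ≠ 0`, and comparing
translation vectors gives `a = b`. So `k` and `k' = g k g⁻¹` have the same `a`-th power `w` and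
the same translation vector, hence differ only on a finite set. Points on finite `w`-orbits are
fixed by both; any other point has an infinite `w`-orbit, which leaves that finite set, and since
`w` commutes with `k` and `k'` they agree at the point too. Thus `k' = k` and `g` normalizes `L`.
-/

open Filter Function Subgroup

namespace Subgroup

variable {G : Type*} [Group G]

theorem relIndex_zpowers_pow_ne_zero (g : G) {N : ℕ} (hN : N ≠ 0) :
    (zpowers (g ^ N)).relIndex (zpowers g) ≠ 0 := by
  have hcomap := index_comap (zpowers (g ^ N)) (zpowersHom G g)
  rw [range_zpowersHom] at hcomap
  have hle : (AddSubgroup.zmultiples (N : ℤ)).toSubgroup ≤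
      (zpowers (g ^ N)).comap (zpowersHom G g) := by
    rintro x ⟨j, hj⟩
    exact ⟨j, by simp [← hj, ← zpow_natCast, ← zpow_mul, mul_comm]⟩
  rw [← hcomap]
  refine ne_zero_of_dvd_ne_zero ?_ (index_dvd_of_le hle)
  rw [AddSubgroup.index_toSubgroup, Int.index_zmultiples]
  simpa using hN

theorem exists_relIndex_zpowers_ne_zero {K : Subgroup G} [Infinite K] (C : Subgroup K)
    [C.FiniteIndex] [IsCyclic C] : ∃ c ∈ K, ¬ IsOfFinOrder c ∧ (zpowers c).relIndex K ≠ 0 := by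
  obtain ⟨c, rfl⟩ := (Subgroup.isCyclic_iff_exists_zpowers_eq_top C).mp ‹_›
  refine ⟨c, c.2, ?_, ?_⟩
  · have hinf : Infinite (zpowers c) := by
      rw [← not_finite_iff_infinite]
      intro hfin
      have := (finite_iff_finite_and_finiteIndex (zpowers c)).mpr ⟨hfin, ‹_›⟩
      exact not_finite K
    rw [show (c : G) = K.subtype c from rfl, K.subtype_injective.isOfFinOrder_iff,
      ← infinite_zpowers]
    exact Set.infinite_coe_iff.mp hinf
  · have h := relIndex_map_map_of_injective (zpowers c) ⊤ K.subtype_injective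
    rw [MonoidHom.map_zpowers, ← MonoidHom.range_eq_map, range_subtype, relIndex_top_right,
      K.coe_subtype] at h
    rw [h]
    exact FiniteIndex.index_ne_zero

end Subgroup

theorem Function.notMem_periodicPts_of_mapsTo_of_lt {α β : Type*} [Preorder β] {f : α → α}
    {s : Set α} (hs : Set.MapsTo f s s) (φ : α → β) (hφ : ∀ a ∈ s, φ a < φ (f a))
    {a : α} (ha : a ∈ s) : a ∉ periodicPts f := by
  rintro ⟨d, hd, hper⟩
  have hmono : StrictMono fun t => φ (f^[t] a) :=
    strictMono_nat_of_lt_succ fun t => by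
      simpa only [iterate_succ_apply'] using hφ _ (hs.iterate t ha)
  simpa [hper.eq] using hmono hd

namespace Equiv.Perm

variable {α : Type*}

theorem mem_periodicPts_of_zpow_apply_eq {σ : Perm α} {a : ℤ} {x : α} (ha : a ≠ 0)
    (h : (σ ^ a) x = x) : x ∈ periodicPts σ := by
  have hdvd := (MulAction.zpow_smul_eq_iff_minimalPeriod_dvd (a := σ) (b := x) (n := a)).mp h
  rw [← minimalPeriod_pos_iff_mem_periodicPts, Nat.pos_iff_ne_zero]
  intro h0
  exact ha (zero_dvd_iff.mp (by exact_mod_cast h0 ▸ hdvd))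

theorem mem_periodicPts_of_mem_periodicPts_zpow {σ : Perm α} {a : ℤ} {x : α} (ha : a ≠ 0)
    (h : x ∈ periodicPts ⇑(σ ^ a)) : x ∈ periodicPts σ := by
  obtain ⟨d, hd, hx⟩ := h
  rw [IsPeriodicPt, IsFixedPt, ← coe_pow, ← zpow_natCast, ← zpow_mul] at hx
  exact mem_periodicPts_of_zpow_apply_eq (mul_ne_zero ha (by exact_mod_cast hd.ne')) hx

theorem exists_pow_periodicPts_subset_fixedPoints {σ : Perm α}
    (h : (periodicPts σ \ fixedPoints σ).Finite) :
    ∃ N ≠ 0, periodicPts ⇑(σ ^ N) ⊆ fixedPoints ⇑(σ ^ N) := by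
  classical
  set N := ∏ x ∈ h.toFinset, minimalPeriod σ x
  have hper : ∀ x ∈ periodicPts σ, IsPeriodicPt σ N x := by
    intro x hx
    by_cases hfix : IsFixedPt σ x
    · exact hfix.iterate N
    · exact isPeriodicPt_iff_minimalPeriod_dvd.mpr
        (Finset.dvd_prod_of_mem _ (h.mem_toFinset.mpr ⟨hx, hfix⟩))
  have hN : N ≠ 0 := Finset.prod_ne_zero_iff.mpr fun x hx =>
    (minimalPeriod_pos_of_mem_periodicPts (h.mem_toFinset.mp hx).1).ne'
  refine ⟨N, hN, fun x hx => ?_⟩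
  have := hper x (mem_periodicPts_of_mem_periodicPts_zpow (a := N) (by exact_mod_cast hN)
    (by simpa using hx))
  rwa [IsPeriodicPt, iterate_eq_pow] at this

theorem periodicPts_conj_subset_fixedPoints {k : Perm α} (hk : periodicPts k ⊆ fixedPoints k)
    (g : Perm α) : periodicPts ⇑(g * k * g⁻¹) ⊆ fixedPoints ⇑(g * k * g⁻¹) := by
  intro u hu
  have hsc : Semiconj ⇑g⁻¹ ⇑(g * k * g⁻¹) k := fun x => by simp
  have := hk (hsc.mapsTo_periodicPts hu)
  simp only [mem_fixedPoints, IsFixedPt] at this ⊢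
  rw [mul_apply, mul_apply, this]
  simp

theorem apply_eq_of_commute_of_notMem_periodicPts {k k' w : Perm α} (hk : Commute k w)
    (hk' : Commute k' w) (hfin : {x | k x ≠ k' x}.Finite) {u : α}
    (hu : u ∉ periodicPts w) : k u = k' u := by
  have hinj : Injective fun t => (w ^ t) u := by
    intro s t hst
    by_contra hne
    simp only [← iterate_eq_pow] at hst
    rcases lt_or_gt_of_ne hne with hlt | hlt
    · exact hu (mk_mem_periodicPts (by omega) (iterate_cancel w.injective hst.symm))
    · exact hu (mk_mem_periodicPts (by omega) (iterate_cancel w.injective hst))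
  obtain ⟨_, ⟨t, rfl⟩, ht⟩ := (Set.infinite_range_of_injective hinj).exists_notMem_finite hfin
  apply (w ^ t).injective
  simpa only [← mul_apply, (hk.pow_right t).eq, (hk'.pow_right t).eq, Set.mem_ofPred_eq,
    not_not] using ht

theorem eq_one_of_finite_ne {k : Perm α} (hk : periodicPts k ⊆ fixedPoints k)
    (hfin : {x | k x ≠ x}.Finite) : k = 1 := by
  ext u
  by_cases hu : u ∈ periodicPts k
  · exact hk hu
  · exact apply_eq_of_commute_of_notMem_periodicPts (Commute.refl k) (Commute.one_left k)
      hfin hu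

theorem eq_of_zpow_eq {k k' : Perm α} (hk : periodicPts k ⊆ fixedPoints k)
    (hk' : periodicPts k' ⊆ fixedPoints k') (hfin : {x | k x ≠ k' x}.Finite) {a : ℤ}
    (ha : a ≠ 0) (h : k ^ a = k' ^ a) : k = k' := by
  ext u
  by_cases hu : u ∈ periodicPts ⇑(k ^ a)
  · have hu' : u ∈ periodicPts ⇑(k' ^ a) := h ▸ hu
    rw [hk (mem_periodicPts_of_mem_periodicPts_zpow ha hu),
      hk' (mem_periodicPts_of_mem_periodicPts_zpow ha hu')]
  · refine apply_eq_of_commute_of_notMem_periodicPts ((Commute.refl k).zpow_right a) ?_ hfin hu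
    rw [h]
    exact (Commute.refl k').zpow_right a

end Equiv.Perm

theorem finite_of_eventually_notMem {ι : Type*} [Finite ι] {s : Set (ℕ × ι)}
    (h : ∀ᶠ i in atTop, ∀ x, (i, x) ∉ s) : s.Finite := by
  obtain ⟨Z, hZ⟩ := eventually_atTop.1 h
  refine ((Set.finite_Iio Z).prod Set.finite_univ).subset fun ⟨i, x⟩ hu => ?_
  exact ⟨lt_of_not_ge fun hi => hZ i hi x hu, trivial⟩

namespace EvTrans

variable {n : ℕ} {f g : ℕ × Fin n → ℕ × Fin n} {m m' mf mg : Fin n → ℤ}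
  {σ τ : Equiv.Perm (ℕ × Fin n)}

theorem eventually (h : EvTrans n f m) :
    ∀ᶠ i in atTop, ∀ x, (f (i, x)).2 = x ∧ ((f (i, x)).1 : ℤ) = i + m x :=
  eventually_all.2 fun x => eventually_atTop.2 (h x)

theorem unique (h : EvTrans n f m) (h' : EvTrans n f m') : m = m' := by
  obtain ⟨i, hi⟩ := (h.eventually.and h'.eventually).exists
  funext x
  linarith [(hi.1 x).2, (hi.2 x).2]

theorem comp (hf : EvTrans n f mf) (hg : EvTrans n g mg) : EvTrans n (f ∘ g) (mf + mg) := by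
  intro x
  obtain ⟨zf, hzf⟩ := hf x
  obtain ⟨zg, hzg⟩ := hg x
  refine ⟨zg + zf + (mg x).natAbs, fun i hi => ?_⟩
  obtain ⟨hg2, hg1⟩ := hzg i (by omega)
  obtain ⟨hf2, hf1⟩ := hzf (g (i, x)).1 (by omega)
  rw [comp_apply, show g (i, x) = ((g (i, x)).1, x) from Prod.ext rfl hg2, hf1, hg1, Pi.add_apply]
  exact ⟨hf2, by ring⟩

theorem one : EvTrans n ⇑(1 : Equiv.Perm (ℕ × Fin n)) 0 :=
  fun _ => ⟨0, fun i _ => by simp⟩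

theorem inv (h : EvTrans n σ m) : EvTrans n ⇑σ⁻¹ (-m) := by
  intro x
  obtain ⟨z, hz⟩ := h x
  refine ⟨z + (m x).natAbs, fun i hi => ?_⟩
  obtain ⟨h2, h1⟩ := hz ((i : ℤ) - m x).toNat (by omega)
  have hσ : σ (((i : ℤ) - m x).toNat, x) = (i, x) := Prod.ext (by omega) h2
  rw [Equiv.Perm.inv_eq_iff_eq.mpr hσ.symm, Pi.neg_apply]
  exact ⟨rfl, by omega⟩

theorem pow (h : EvTrans n σ m) (t : ℕ) : EvTrans n ⇑(σ ^ t) (t • m) := by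
  induction t with
  | zero => simpa using one
  | succ t ih => rw [pow_succ, succ_nsmul]; exact ih.comp h

theorem zpow (h : EvTrans n σ m) (t : ℤ) : EvTrans n ⇑(σ ^ t) (t • m) := by
  rcases t with t | t
  · simpa using h.pow t
  · rw [zpow_negSucc, negSucc_zsmul]
    exact (h.pow (t + 1)).inv

theorem conj (hσ : EvTrans n σ m) (hτ : EvTrans n τ mg) : EvTrans n ⇑(τ * σ * τ⁻¹) m := by
  simpa using (hτ.comp hσ).comp hτ.inv

theorem finite_ne (hf : EvTrans n f m) (hg : EvTrans n g m) : {u | f u ≠ g u}.Finite := by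
  refine finite_of_eventually_notMem ?_
  filter_upwards [hf.eventually, hg.eventually] with i hfi hgi x
  have hfst : (f (i, x)).1 = (g (i, x)).1 := by exact_mod_cast (hfi x).2.trans (hgi x).2.symm
  simpa using Prod.ext hfst ((hfi x).1.trans (hgi x).1.symm)

theorem eventually_notMem_periodicPts (h : EvTrans n f m) {x : Fin n} (hx : 0 < m x) :
    ∀ᶠ i in atTop, (i, x) ∉ periodicPts f := by
  obtain ⟨Z, hZ⟩ := h x
  refine eventually_atTop.2 ⟨Z, fun i hi =>
    notMem_periodicPts_of_mapsTo_of_lt (s := {u | u.2 = x ∧ Z ≤ u.1}) ?_ Prod.fst ?_ ⟨rfl, hi⟩⟩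
  · rintro ⟨j, y⟩ ⟨rfl : y = x, hj⟩
    obtain ⟨h2, h1⟩ := hZ j hj
    exact ⟨h2, by omega⟩
  · rintro ⟨j, y⟩ ⟨rfl : y = x, hj⟩
    have := (hZ j hj).2
    change j < (f (j, y)).1
    omega

theorem finite_periodicPts_diff_fixedPoints (h : EvTrans n σ m) :
    (periodicPts σ \ fixedPoints σ).Finite := by
  refine finite_of_eventually_notMem (eventually_all.2 fun x => ?_)
  rcases lt_trichotomy (m x) 0 with hneg | hzero | hpos
  · filter_upwards [h.inv.eventually_notMem_periodicPts (by simpa using hneg)] with i hi hu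
    exact hi (Equiv.Perm.mem_periodicPts_of_mem_periodicPts_zpow (a := -1) (by simp)
      (by simpa using hu.1))
  · filter_upwards [eventually_atTop.2 (h x)] with i hi hu
    exact hu.2 (Prod.ext (by omega) hi.1)
  · filter_upwards [h.eventually_notMem_periodicPts hpos] with i hi hu using hi hu.1

theorem ne_zero (h : EvTrans n σ m) (hσ : periodicPts σ ⊆ fixedPoints σ)
    (hord : ¬ IsOfFinOrder σ) : m ≠ 0 := by
  rintro rfl
  exact hord (Equiv.Perm.eq_one_of_finite_ne hσ (h.finite_ne one) ▸ IsOfFinOrder.one)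

theorem conj_eq_self_of_conj_zpow_eq (hσ : EvTrans n σ m) (hτ : EvTrans n τ mg)
    (hpure : periodicPts σ ⊆ fixedPoints σ) (hord : ¬ IsOfFinOrder σ) {a b : ℤ} (ha : a ≠ 0)
    (h : τ * σ ^ b * τ⁻¹ = σ ^ a) : τ * σ * τ⁻¹ = σ := by
  obtain rfl : b = a := by
    have hb : EvTrans n ⇑(σ ^ a) (b • m) := h ▸ (hσ.zpow b).conj hτ
    exact smul_left_injective ℤ (hσ.ne_zero hpure hord) (hb.unique (hσ.zpow a))
  refine Equiv.Perm.eq_of_zpow_eq (Equiv.Perm.periodicPts_conj_subset_fixedPoints hpure τ)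
    hpure ((hσ.conj hτ).finite_ne hσ) ha ?_
  rw [conj_zpow, h]

end EvTrans

theorem Houghton.infinite_inf_map_conj_zpowers_iff {n : ℕ} {k g : Equiv.Perm (ℕ × Fin n)}
    (hk : k ∈ Houghton n) (hpure : periodicPts k ⊆ fixedPoints k) (hord : ¬ IsOfFinOrder k)
    (hg : g ∈ Houghton n) :
    Infinite ↥(zpowers k ⊓ (zpowers k).map (MulAut.conj g).toMonoidHom) ↔
      g ∈ normalizer (zpowers k : Set (Equiv.Perm (ℕ × Fin n))) := by
  obtain ⟨μ, hμ⟩ := hk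
  obtain ⟨mg, hmg⟩ := hg
  rw [mem_normalizer_iff_map_conj_eq]
  constructor
  · intro hinf
    obtain ⟨⟨x, hxL, hxM⟩, hx1⟩ :=
      exists_ne (1 : ↥(zpowers k ⊓ (zpowers k).map (MulAut.conj g).toMonoidHom))
    obtain ⟨a, rfl⟩ := mem_zpowers_iff.mp hxL
    obtain ⟨_, ⟨b, rfl⟩, hb⟩ := mem_map.mp hxM
    have ha : a ≠ 0 := by
      rintro rfl
      exact hx1 (Subtype.ext (zpow_zero k))
    have hconj := hμ.conj_eq_self_of_conj_zpow_eq hmg hpure hord ha (by simpa using hb)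
    rw [MonoidHom.map_zpowers]
    simp [hconj]
  · intro h
    rw [show (zpowers k).map (MulAut.conj g).toMonoidHom = zpowers k from h, inf_idem]
    exact (infinite_zpowers.mpr hord).to_subtype

theorem houghton_commensurator_is_normalizer_general (n : ℕ)
    (K : Subgroup (Equiv.Perm (ℕ × Fin n))) (hK : K ≤ Houghton n)
    (hinf : Infinite K)
    (hvc : ∃ C : Subgroup ↥K, C.FiniteIndex ∧ IsCyclic ↥C) :
    ∃ L : Subgroup (Equiv.Perm (ℕ × Fin n)), L ≤ K ∧ IsCyclic ↥L ∧
      Infinite ↥L ∧ (L.subgroupOf K).FiniteIndex ∧ Infinite ↥(K ⊓ L) ∧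
      ∀ g ∈ Houghton n,
        (Infinite ↥(L ⊓ Subgroup.map (MulAut.conj g).toMonoidHom L) ↔
          g ∈ Subgroup.normalizer (L : Set (Equiv.Perm (ℕ × Fin n)))) := by
  obtain ⟨C, _, _⟩ := hvc
  obtain ⟨c, hcK, hc, hcfi⟩ := exists_relIndex_zpowers_ne_zero C
  obtain ⟨m, hm⟩ := hK hcK
  obtain ⟨N, hN, hpure⟩ :=
    Equiv.Perm.exists_pow_periodicPts_subset_fixedPoints hm.finite_periodicPts_diff_fixedPoints
  have hord : ¬ IsOfFinOrder (c ^ N) := fun h => hc (h.of_pow hN)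
  have hLK : zpowers (c ^ N) ≤ K := zpowers_le.mpr (pow_mem hcK N)
  refine ⟨zpowers (c ^ N), hLK, inferInstance, (infinite_zpowers.mpr hord).to_subtype,
    ⟨relIndex_ne_zero_trans (relIndex_zpowers_pow_ne_zero c hN) hcfi⟩, ?_, fun g hg =>
      Houghton.infinite_inf_map_conj_zpowers_iff (pow_mem (hK hcK) N) hpure hord hg⟩
  rw [inf_eq_right.mpr hLK]
  exact (infinite_zpowers.mpr hord).to_subtype

/-- For every infinite virtually cyclic subgroup `K` of
Houghton's group `H_n` there is an infinite cyclic subgroup `L` of finite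
index in `K` (in particular `K ∩ L = L` is infinite, so `L` is commensurate
with `K`) such that an element `g` of `H_n` satisfies `|L ∩ gLg⁻¹| = ∞` if
and only if `g` normalizes `L`. -/
theorem houghton_commensurator_is_normalizer (n : ℕ) (hn : 1 ≤ n)
    (K : Subgroup (Equiv.Perm (ℕ × Fin n))) (hK : K ≤ Houghton n)
    (hinf : Infinite K)
    (hvc : ∃ C : Subgroup ↥K, C.FiniteIndex ∧ IsCyclic ↥C) :
    ∃ L : Subgroup (Equiv.Perm (ℕ × Fin n)), L ≤ K ∧ IsCyclic ↥L ∧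
      Infinite ↥L ∧ (L.subgroupOf K).FiniteIndex ∧ Infinite ↥(K ⊓ L) ∧
      ∀ g ∈ Houghton n,
        (Infinite ↥(L ⊓ Subgroup.map (MulAut.conj g).toMonoidHom L) ↔
          g ∈ Subgroup.normalizer (L : Set (Equiv.Perm (ℕ × Fin n)))) :=
  houghton_commensurator_is_normalizer_general n K hK hinf hvc
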